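/- arXiv:2302.03886 — 4 statements merged into one kernel-verified Lean document; each statement's English description precedes it below -/
import Mathlib

section
/- For every order-N real tensor X of shape (I_1,…,I_N) there exist orthogonal matrices U^(n) ∈ ℝ^{I_n×I_n} for n = 1,…,N and a tensor S ∈ ℝ^{I_1×⋯×I_N} such that X = S ×_1 U^(1) ×_2 ⋯ ×_N U^(N), and for every n ∈ [N]: (i) all-orthogonality: ⟨S_{i_n=α}, S_{i_n=β}⟩ = 0 whenever α ≠ β, where S_{i_n=α} denotes the order-(N−1) subtensor of S obtained by fixing the n-th index to α; (ii) ordering: ‖S_{i_n=1}‖_F ≥ ‖S_{i_n=2}‖_F ≥ ⋯ ≥ ‖S_{i_n=I_n}‖_F ≥ 0; and (iii) ‖S_{i_n=i}‖_F = σ_i^(n), the i-th largest singular value of the mode-n unfolding X_(n). -/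
open scoped BigOperators
open Matrix

/-- Combine a fixed `n`-th coordinate with coordinates for the remaining modes. -/
def fullIdx {N : ℕ} {I : Fin N → ℕ} (n : Fin N) (i : Fin (I n))
    (j : ∀ m : {m : Fin N // m ≠ n}, Fin (I m.1)) : ∀ k, Fin (I k) :=
  fun k => if h : k = n then Fin.cast (congrArg I h).symm i else j ⟨k, h⟩

/-- Mode-`n` unfolding of a tensor. -/
def modeUnfold {N : ℕ} {I : Fin N → ℕ} (X : (∀ k, Fin (I k)) → ℝ) (n : Fin N) :
    Matrix (Fin (I n)) (∀ m : {m : Fin N // m ≠ n}, Fin (I m.1)) ℝ :=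
  fun i j => X (fullIdx n i j)

/-- Squared Frobenius norm of a tensor. -/
noncomputable def frobSq {N : ℕ} {I : Fin N → ℕ} (X : (∀ k, Fin (I k)) → ℝ) : ℝ :=
  ∑ i : ∀ k, Fin (I k), (X i) ^ 2

/-- Tucker/multilinear reconstruction `G ×₁ A 1 ×₂ ⋯ ×_N A N`. -/
noncomputable def tucker {N : ℕ} {I R : Fin N → ℕ} (G : (∀ k, Fin (R k)) → ℝ)
    (A : ∀ n, Matrix (Fin (I n)) (Fin (R n)) ℝ) : (∀ k, Fin (I k)) → ℝ :=
  fun i => ∑ j : ∀ k, Fin (R k), G j * ∏ n, A n (i n) (j n)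

/-- Optimal rank-`R` Tucker loss `L(X, R)`. -/
noncomputable def tuckerLoss {N : ℕ} (I : Fin N → ℕ) (X : (∀ k, Fin (I k)) → ℝ)
    (R : Fin N → ℕ) : ℝ :=
  sInf {v : ℝ | ∃ (G : (∀ k, Fin (R k)) → ℝ)
    (A : ∀ n, Matrix (Fin (I n)) (Fin (R n)) ℝ),
    v = frobSq (fun i => X i - tucker G A i)}

/-- `σ` lists the singular values of `M` in nonincreasing order:
entries are nonnegative, nonincreasing, and their squares are the eigenvalues
of the positive semidefinite matrix `M * Mᵀ` (up to a permutation). -/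
def IsSingularValues {k : ℕ} {c : Type*} [Fintype c]
    (M : Matrix (Fin k) c ℝ) (σ : Fin k → ℝ) : Prop :=
  (∀ i, 0 ≤ σ i) ∧ Antitone σ ∧
    ∃ e : Equiv.Perm (Fin k), ∀ i, σ i ^ 2 =
      (Matrix.isHermitian_mul_conjTranspose_self M).eigenvalues (e i)

/-- Truncation of a tensor to the leading `R`-block. -/
def truncate {N : ℕ} {I : Fin N → ℕ} (S : (∀ k, Fin (I k)) → ℝ)
    (R : Fin N → ℕ) : (∀ k, Fin (I k)) → ℝ :=
  fun i => if ∀ n, (i n : ℕ) < R n then S i else 0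

/-- Surrogate loss `L̃(X, R)`: sum of the squared tail singular values. -/
noncomputable def surrLoss {N : ℕ} {I : Fin N → ℕ} (σ : ∀ n, Fin (I n) → ℝ)
    (R : Fin N → ℕ) : ℝ :=
  ∑ n, ∑ i ∈ Finset.univ.filter (fun i : Fin (I n) => R n ≤ (i : ℕ)), σ n i ^ 2

/-- Packing objective: sum of the squared leading singular values. -/
noncomputable def packObj {N : ℕ} {I : Fin N → ℕ} (σ : ∀ n, Fin (I n) → ℝ)
    (R : Fin N → ℕ) : ℝ :=
  ∑ n, ∑ i ∈ Finset.univ.filter (fun i : Fin (I n) => (i : ℕ) < R n), σ n i ^ 2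

/-! Take `U n` to be an orthonormal eigenbasis of `X₍ₙ₎ X₍ₙ₎ᵀ`, ordered so that its eigenvalues
are `σ n i ^ 2`, and `S = X ×₁ U₁ᵀ ⋯ ×_N U_Nᵀ`. The mode-`n` unfolding of `S` is
`U nᵀ X₍ₙ₎ Kᵀ`, where the Kronecker product `K` of the other `U mᵀ` is again orthogonal, so
`S₍ₙ₎ S₍ₙ₎ᵀ = U nᵀ X₍ₙ₎ X₍ₙ₎ᵀ U n = diag (σ n ^ 2)`: its off-diagonal entries give
all-orthogonality and its diagonal the slice norms. Orthogonality of the `U n` gives back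
`X = S ×₁ U₁ ⋯ ×_N U_N`. -/

namespace Matrix

variable {ι R : Type*} [Fintype ι] [CommSemiring R]

def kroneckerPi {m n : ι → Type*} (A : ∀ i, Matrix (m i) (n i) R) :
    Matrix (∀ i, m i) (∀ i, n i) R :=
  of fun x y => ∏ i, A i (x i) (y i)

theorem transpose_kroneckerPi {m n : ι → Type*} (A : ∀ i, Matrix (m i) (n i) R) :
    (kroneckerPi A)ᵀ = kroneckerPi fun i => (A i)ᵀ :=
  rfl

theorem kroneckerPi_mul_kroneckerPi [DecidableEq ι] {l m n : ι → Type*} [∀ i, Fintype (m i)]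
    (A : ∀ i, Matrix (l i) (m i) R) (B : ∀ i, Matrix (m i) (n i) R) :
    kroneckerPi A * kroneckerPi B = kroneckerPi fun i => A i * B i := by
  ext x z
  simp only [kroneckerPi, mul_apply, of_apply, Fintype.prod_sum, Finset.prod_mul_distrib]

theorem kroneckerPi_one {m : ι → Type*} [∀ i, DecidableEq (m i)] :
    kroneckerPi (fun i => (1 : Matrix (m i) (m i) R)) = 1 := by
  ext x y
  simp only [kroneckerPi, of_apply, one_apply, Finset.prod_boole, Finset.mem_univ, true_implies,
    funext_iff]

end Matrix

theorem Matrix.IsHermitian.exists_transpose_mul_mul_eq_diagonal {n : Type*} [Fintype n]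
    [DecidableEq n] {A : Matrix n n ℝ} (hA : A.IsHermitian) (e : Equiv.Perm n) :
    ∃ U : Matrix n n ℝ, Uᵀ * U = 1 ∧ Uᵀ * A * U = diagonal (hA.eigenvalues ∘ e) := by
  set V : Matrix n n ℝ := (hA.eigenvectorUnitary : Matrix n n ℝ)
  have hstar : star V = Vᵀ := by rw [star_eq_conjTranspose, conjTranspose_eq_transpose_of_trivial]
  have hV : Vᵀ * V = 1 := hstar ▸ Unitary.coe_star_mul_self hA.eigenvectorUnitary
  have hdiag : Vᵀ * A * V = diagonal hA.eigenvalues := by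
    rw [← hstar]
    simpa [Unitary.conjStarAlgAut_star_apply] using
      hA.conjStarAlgAut_star_eigenvectorUnitary
  have hpermute (B : Matrix n n ℝ) : Vᵀ.submatrix e id * B * V.submatrix id e =
      (Vᵀ * B * V).submatrix e e := by
    rw [submatrix_mul _ _ _ id _ Function.bijective_id,
      submatrix_mul _ _ _ id _ Function.bijective_id, submatrix_id_id]
  refine ⟨V.submatrix id e, ?_, ?_⟩
  · simpa [hV] using hpermute 1
  · rw [transpose_submatrix, hpermute, hdiag, submatrix_diagonal_equiv]

theorem IsSingularValues.exists_transpose_mul_mul_eq_diagonal {k : ℕ} {c : Type*} [Fintype c]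
    {M : Matrix (Fin k) c ℝ} {σ : Fin k → ℝ} (h : IsSingularValues M σ) :
    ∃ U : Matrix (Fin k) (Fin k) ℝ, Uᵀ * U = 1 ∧
      Uᵀ * (M * Mᵀ) * U = diagonal fun i => σ i ^ 2 := by
  obtain ⟨-, -, e, he⟩ := h
  obtain ⟨U, hU, hdiag⟩ :=
    (isHermitian_mul_conjTranspose_self M).exists_transpose_mul_mul_eq_diagonal e
  refine ⟨U, hU, ?_⟩
  rw [← conjTranspose_eq_transpose_of_trivial M, hdiag]
  exact congrArg diagonal (funext fun i => (he i).symm)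

section Tensor

variable {N : ℕ} {I R Q : Fin N → ℕ}

theorem fullIdx_eq_piSplitAt_symm (n : Fin N) (i : Fin (I n))
    (j : ∀ m : {m : Fin N // m ≠ n}, Fin (I m.1)) :
    fullIdx n i j = (Equiv.piSplitAt n fun k => Fin (I k)).symm (i, j) := by
  funext k
  by_cases h : k = n
  · subst h
    simp [fullIdx]
  · simp [fullIdx, h]

theorem tucker_eq_kroneckerPi_mulVec (G : (∀ k, Fin (R k)) → ℝ)
    (A : ∀ n, Matrix (Fin (I n)) (Fin (R n)) ℝ) :
    tucker G A = kroneckerPi A *ᵥ G := by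
  funext i
  simp only [tucker, mulVec, dotProduct, kroneckerPi, of_apply, mul_comm]

theorem tucker_tucker (G : (∀ k, Fin (Q k)) → ℝ) (C : ∀ n, Matrix (Fin (R n)) (Fin (Q n)) ℝ)
    (A : ∀ n, Matrix (Fin (I n)) (Fin (R n)) ℝ) :
    tucker (tucker G C) A = tucker G fun n => A n * C n := by
  simp only [tucker_eq_kroneckerPi_mulVec, mulVec_mulVec, kroneckerPi_mul_kroneckerPi]

theorem tucker_one (G : (∀ k, Fin (I k)) → ℝ) : tucker G (fun _ => 1) = G := by
  rw [tucker_eq_kroneckerPi_mulVec, kroneckerPi_one, one_mulVec]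

theorem modeUnfold_tucker (G : (∀ k, Fin (R k)) → ℝ) (A : ∀ n, Matrix (Fin (I n)) (Fin (R n)) ℝ)
    (n : Fin N) :
    modeUnfold (tucker G A) n =
      A n * modeUnfold G n * (kroneckerPi fun m : {m : Fin N // m ≠ n} => A m.1)ᵀ := by
  ext α j
  simp only [modeUnfold, tucker, mul_apply, kroneckerPi, transpose_apply, of_apply,
    fullIdx_eq_piSplitAt_symm, Finset.sum_mul]
  rw [← (Equiv.piSplitAt n fun k => Fin (R k)).symm.sum_comp, Fintype.sum_prod_type,
    Finset.sum_comm]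
  refine Fintype.sum_congr _ _ fun j' => Fintype.sum_congr _ _ fun a => ?_
  rw [Fintype.prod_eq_mul_prod_subtype_ne _ n]
  simp only [Equiv.piSplitAt_symm_apply, fun m : {m : Fin N // m ≠ n} => m.2, ↓reduceDIte]
  ring

theorem modeUnfold_tucker_mul_transpose (G : (∀ k, Fin (R k)) → ℝ)
    (A : ∀ n, Matrix (Fin (I n)) (Fin (R n)) ℝ) (n : Fin N)
    (hA : ∀ m, m ≠ n → (A m)ᵀ * A m = 1) :
    modeUnfold (tucker G A) n * (modeUnfold (tucker G A) n)ᵀ =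
      A n * (modeUnfold G n * (modeUnfold G n)ᵀ) * (A n)ᵀ := by
  have hK : (kroneckerPi fun m : {m : Fin N // m ≠ n} => A m.1)ᵀ *
      kroneckerPi (fun m : {m : Fin N // m ≠ n} => A m.1) = 1 := by
    rw [transpose_kroneckerPi, kroneckerPi_mul_kroneckerPi]
    simp only [fun m : {m : Fin N // m ≠ n} => hA m.1 m.2, kroneckerPi_one]
  simp only [modeUnfold_tucker, transpose_mul, transpose_transpose, Matrix.mul_assoc]
  rw [← Matrix.mul_assoc _ (kroneckerPi _), hK, Matrix.one_mul]

end Tensor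

theorem hosvd_exists_general {N : ℕ} {I : Fin N → ℕ}
    (X : (∀ k, Fin (I k)) → ℝ) (σ : ∀ n, Fin (I n) → ℝ)
    (hσ : ∀ n, IsSingularValues (modeUnfold X n) (σ n)) :
    ∃ (U : ∀ n, Matrix (Fin (I n)) (Fin (I n)) ℝ) (S : (∀ k, Fin (I k)) → ℝ),
      (∀ n, (U n)ᵀ * U n = 1) ∧
      X = tucker S U ∧
      (∀ (n : Fin N) (α β : Fin (I n)), α ≠ β →
        ∑ j, modeUnfold S n α j * modeUnfold S n β j = 0) ∧
      (∀ (n : Fin N) (α β : Fin (I n)), α ≤ β →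
        Real.sqrt (∑ j, modeUnfold S n β j ^ 2) ≤
          Real.sqrt (∑ j, modeUnfold S n α j ^ 2)) ∧
      (∀ (n : Fin N) (i : Fin (I n)),
        Real.sqrt (∑ j, modeUnfold S n i j ^ 2) = σ n i) := by
  choose U hU hUdiag using fun n => (hσ n).exists_transpose_mul_mul_eq_diagonal
  have hU_mul_transpose (n : Fin N) : U n * (U n)ᵀ = 1 := mul_eq_one_comm.mp (hU n)
  set S := tucker X fun n => (U n)ᵀ
  have hgram (n : Fin N) (α β : Fin (I n)) :
      ∑ j, modeUnfold S n α j * modeUnfold S n β j = diagonal (fun i => σ n i ^ 2) α β := by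
    have h := modeUnfold_tucker_mul_transpose X (fun m => (U m)ᵀ) n
      fun m _ => by rw [transpose_transpose, hU_mul_transpose m]
    rw [transpose_transpose, hUdiag] at h
    exact congrFun (congrFun h α) β
  have hnorm (n : Fin N) (i : Fin (I n)) : √(∑ j, modeUnfold S n i j ^ 2) = σ n i := by
    simp only [sq, hgram, diagonal_apply_eq]
    exact Real.sqrt_mul_self ((hσ n).1 i)
  refine ⟨U, S, hU, ?_, fun n α β h => by rw [hgram, diagonal_apply_ne _ h], ?_, hnorm⟩
  · simp only [S, tucker_tucker, hU_mul_transpose, tucker_one]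
  · intro n α β h
    rw [hnorm, hnorm]
    exact (hσ n).2.1 h

/-- **HOSVD existence** (De Lathauwer–De Moor–Vandewalle, Theorem 2). -/
theorem hosvd_exists {N : ℕ} {I : Fin N → ℕ} (hI : ∀ n, 1 ≤ I n)
    (X : (∀ k, Fin (I k)) → ℝ) (σ : ∀ n, Fin (I n) → ℝ)
    (hσ : ∀ n, IsSingularValues (modeUnfold X n) (σ n)) :
    ∃ (U : ∀ n, Matrix (Fin (I n)) (Fin (I n)) ℝ) (S : (∀ k, Fin (I k)) → ℝ),
      (∀ n, (U n)ᵀ * U n = 1) ∧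
      X = tucker S U ∧
      (∀ (n : Fin N) (α β : Fin (I n)), α ≠ β →
        ∑ j, modeUnfold S n α j * modeUnfold S n β j = 0) ∧
      (∀ (n : Fin N) (α β : Fin (I n)), α ≤ β →
        Real.sqrt (∑ j, modeUnfold S n β j ^ 2) ≤
          Real.sqrt (∑ j, modeUnfold S n α j ^ 2)) ∧
      (∀ (n : Fin N) (i : Fin (I n)),
        Real.sqrt (∑ j, modeUnfold S n i j ^ 2) = σ n i) :=
  hosvd_exists_general X σ hσ
end

section
/- (Correctness of the reduction from EQUIPARTITION to Tucker packing.) Let T ≥ 2 be an even integer, let w_1,…,w_T ≥ 2 be integers, let M = Σ_{n=1}^T w_n, and let N ≥ T be an integer with 2^{N−T/2} > 4(N−T) + 3M/2. Construct the Tucker packing instance: for n ∈ [T], set I_n = w_n, a_1^(n) = 2M, a_2^(n) = M + w_n, and a_i^(n) = 0 for 3 ≤ i ≤ I_n; for n ∈ [N]\[T], set I_n = 2 and a_1^(n) = a_2^(n) = 2M; and set the budget c = 2^{N−T/2} + 4(N−T) + 3M/2. Then there exists a core shape r ∈ [I_1]×⋯×[I_N] with ∏_{n=1}^N R_n + Σ_{n=1}^N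 I_n R_n ≤ c and Σ_{n=1}^N Σ_{i=1}^{R_n} a_i^(n) ≥ M(4N − 3T/2) + M/2 if and only if there exists a subset S ⊆ [T] with |S| = T/2 and Σ_{n∈S} w_n = M/2. -/
open scoped BigOperators

/-- Tucker packing objective `f(R) = Σ_{n=1}^N Σ_{i=1}^{R_n} a_i⁽ⁿ⁾`
(sequences are indexed starting at `1`). -/
noncomputable def fObj {N : ℕ} (a : Fin N → ℕ → ℝ) (R : Fin N → ℕ) : ℝ :=
  ∑ n, ∑ i ∈ Finset.Icc 1 (R n), a n i

/-!
Write `N = T + K`, the first `T` coordinates being the items and the last `K` the padding.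
Since the columns vanish beyond index 2, truncating a feasible shape to `min R_n 2` keeps its
value and lowers its cost; a shape with entries in `{1, 2}` is given by the set `S` of items and
the set `P` of padding coordinates where it equals 2. It costs
`2^(|S|+|P|) + M + w(S) + 2K + 2|P|` and is worth `2M(T+K) + M|S| + w(S) + 2M|P|`.
As `4K + 3M/2 < 2^(T/2+K)`, the budget forces `|S| + |P| ≤ T/2 + K`; since `w(S) ≤ M`, every unit
missing there or in `|P| ≤ K` costs `M` of value, more than the slack `M/2` of the target, so
`|S| = T/2`, `P` is everything and `w(S) ≥ M/2`. The linear part of the budget then gives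
`w(S) ≤ M/2`. Conversely an equipartition `S` with `P` everything meets both bounds exactly.
-/

open Finset

theorem sum_Icc_one_min_two {b : ℕ → ℝ} (hb : ∀ i, 3 ≤ i → b i = 0) (r : ℕ) :
    ∑ i ∈ Icc 1 (min r 2), b i = ∑ i ∈ Icc 1 r, b i :=
  sum_subset (Icc_subset_Icc_right (min_le_left r 2)) fun i hi hi' =>
    hb i (by simp only [mem_Icc] at hi hi'; omega)

theorem sum_Icc_one_ite (b : ℕ → ℝ) (p : Prop) [Decidable p] :
    ∑ i ∈ Icc 1 (if p then 2 else 1), b i = b 1 + if p then b 2 else 0 := by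
  split
  · rw [show Icc 1 2 = {1, 2} from rfl, sum_pair (by norm_num)]
  · simp

theorem fObj_min_two {N : ℕ} {a : Fin N → ℕ → ℝ} (ha : ∀ n i, 3 ≤ i → a n i = 0)
    (R : Fin N → ℕ) : fObj a (fun n => min (R n) 2) = fObj a R :=
  sum_congr rfl fun n _ => sum_Icc_one_min_two (ha n) (R n)

theorem prod_add_sum_mul_le {ι : Type*} [Fintype ι] (I : ι → ℕ) {R R' : ι → ℕ}
    (h : ∀ n, R n ≤ R' n) : ∏ n, R n + ∑ n, I n * R n ≤ ∏ n, R' n + ∑ n, I n * R' n :=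
  add_le_add (prod_le_prod' fun n _ => h n) (sum_le_sum fun n _ => Nat.mul_le_mul_left _ (h n))

section CoreShape

variable {T K : ℕ}

def coreShape (S : Finset (Fin T)) (P : Finset (Fin K)) : Fin (T + K) → ℕ :=
  Fin.append (fun m => if m ∈ S then 2 else 1) (fun i => if i ∈ P then 2 else 1)

theorem coreShape_eq_min {R : Fin (T + K) → ℕ} (hR : ∀ n, 1 ≤ R n) :
    coreShape {m | 2 ≤ R (Fin.castAdd K m)} {i | 2 ≤ R (Fin.natAdd T i)} =
      fun n => min (R n) 2 := by
  have ite_eq_min : ∀ r, 1 ≤ r → (if 2 ≤ r then 2 else 1) = min r 2 := by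
    intro r hr; split <;> omega
  funext n
  refine Fin.addCases (fun m => ?_) (fun i => ?_) n <;> simp [coreShape, ite_eq_min _ (hR _)]

theorem prod_coreShape (S : Finset (Fin T)) (P : Finset (Fin K)) :
    ∏ n, coreShape S P n = 2 ^ (#S + #P) := by
  simp [coreShape, Fin.prod_univ_add, prod_ite_mem, pow_add]

theorem sum_mul_coreShape (I₁ : Fin T → ℕ) (I₂ : Fin K → ℕ) (S : Finset (Fin T))
    (P : Finset (Fin K)) :
    ∑ n, Fin.append I₁ I₂ n * coreShape S P n =
      ∑ m, I₁ m + ∑ m ∈ S, I₁ m + (∑ i, I₂ i + ∑ i ∈ P, I₂ i) := by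
  have mul_ite_two_one : ∀ (x : ℕ) (p : Prop) [Decidable p],
      x * (if p then 2 else 1) = x + if p then x else 0 := by
    intro x p _; split <;> ring
  simp only [coreShape, Fin.sum_univ_add, Fin.append_left, Fin.append_right, mul_ite_two_one,
    sum_add_distrib, sum_ite_mem, univ_inter]

theorem fObj_coreShape (a₁ : Fin T → ℕ → ℝ) (a₂ : Fin K → ℕ → ℝ) (S : Finset (Fin T))
    (P : Finset (Fin K)) :
    fObj (Fin.append a₁ a₂) (coreShape S P) =
      ∑ m, a₁ m 1 + ∑ m ∈ S, a₁ m 2 + (∑ i, a₂ i 1 + ∑ i ∈ P, a₂ i 2) := by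
  simp only [fObj, coreShape, Fin.sum_univ_add, Fin.append_left, Fin.append_right,
    sum_Icc_one_ite, sum_add_distrib, sum_ite_mem, univ_inter]

end CoreShape

section Instance

variable {T K : ℕ}

def tuckerWidths (w : Fin T → ℕ) : Fin (T + K) → ℕ :=
  Fin.append w fun _ => 2

def tuckerColumns (M : ℕ) (w : Fin T → ℕ) : Fin (T + K) → ℕ → ℝ :=
  Fin.append (fun m i => if i = 1 then 2 * M else if i = 2 then M + w m else 0)
    fun _ i => if i = 1 ∨ i = 2 then 2 * M else 0

theorem eq_tuckerWidths {w : Fin T → ℕ} {I : Fin (T + K) → ℕ}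
    (hI : ∀ n : Fin (T + K), I n = if h : (n : ℕ) < T then w ⟨n, h⟩ else 2) :
    I = tuckerWidths w := by
  funext n
  refine Fin.addCases (fun m => ?_) (fun i => ?_) n <;> simp [hI, tuckerWidths]

theorem eq_tuckerColumns {M : ℕ} {w : Fin T → ℕ} {a : Fin (T + K) → ℕ → ℝ}
    (ha : ∀ (n : Fin (T + K)) (i : ℕ), a n i =
      if h : (n : ℕ) < T then
        (if i = 1 then (2 * M : ℝ) else if i = 2 then (M : ℝ) + w ⟨n, h⟩ else 0)
      else (if i = 1 ∨ i = 2 then (2 * M : ℝ) else 0)) :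
    a = tuckerColumns M w := by
  funext n i
  refine Fin.addCases (fun m => ?_) (fun j => ?_) n <;> simp [ha, tuckerColumns]

theorem tuckerColumns_eq_zero (M : ℕ) (w : Fin T → ℕ) (n : Fin (T + K)) {i : ℕ} (hi : 3 ≤ i) :
    tuckerColumns M w n i = 0 := by
  have h1 : i ≠ 1 := by omega
  have h2 : i ≠ 2 := by omega
  refine Fin.addCases (fun m => ?_) (fun j => ?_) n <;> simp [tuckerColumns, h1, h2]

theorem one_le_coreShape_le_tuckerWidths {w : Fin T → ℕ} (hw : ∀ m, 2 ≤ w m)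
    (S : Finset (Fin T)) (n : Fin (T + K)) :
    1 ≤ coreShape S univ n ∧ coreShape S univ n ≤ tuckerWidths w n := by
  refine Fin.addCases (fun m => ?_) (fun i => ?_) n
  · have := hw m
    simp only [coreShape, tuckerWidths, Fin.append_left]
    split <;> omega
  · simp [coreShape, tuckerWidths]

theorem cost_coreShape (w : Fin T → ℕ) (S : Finset (Fin T)) (P : Finset (Fin K)) :
    ∏ n, coreShape S P n + ∑ n, tuckerWidths w n * coreShape S P n =
      2 ^ (#S + #P) + (∑ m, w m + ∑ m ∈ S, w m + 2 * K + 2 * #P) := by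
  simp only [prod_coreShape, tuckerWidths, sum_mul_coreShape, sum_const, card_univ,
    Fintype.card_fin, smul_eq_mul]
  ring

theorem fObj_tuckerColumns_coreShape (M : ℕ) (w : Fin T → ℕ) (S : Finset (Fin T))
    (P : Finset (Fin K)) :
    fObj (tuckerColumns M w) (coreShape S P) =
      2 * M * (T + K) + M * #S + ∑ m ∈ S, (w m : ℝ) + 2 * M * #P := by
  simp [tuckerColumns, fObj_coreShape, sum_add_distrib]
  ring

theorem exists_coreShape_cost_le_fObj_eq (M : ℕ) (w : Fin T → ℕ) {R : Fin (T + K) → ℕ}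
    (hR : ∀ n, 1 ≤ R n) :
    ∃ (S : Finset (Fin T)) (P : Finset (Fin K)),
      ∏ n, coreShape S P n + ∑ n, tuckerWidths w n * coreShape S P n ≤
        ∏ n, R n + ∑ n, tuckerWidths w n * R n ∧
      fObj (tuckerColumns M w) (coreShape S P) = fObj (tuckerColumns M w) R := by
  have hround := coreShape_eq_min hR
  refine ⟨_, _, prod_add_sum_mul_le (tuckerWidths w)
    fun n => (congrFun hround n).trans_le (min_le_left (R n) 2), ?_⟩
  rw [hround, fObj_min_two (tuckerColumns_eq_zero M w)]

end Instance

theorem le_of_two_pow_add_le {m n : ℕ} {x y : ℝ} (hx : 0 ≤ x) (hy : y < 2 ^ n)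
    (h : 2 ^ m + x ≤ 2 ^ n + y) : m ≤ n := by
  have : (2 : ℝ) ^ m < 2 ^ (n + 1) := by rw [pow_succ]; linarith
  exact Nat.lt_succ_iff.mp ((pow_lt_pow_iff_right₀ one_lt_two).mp this)

theorem eq_of_add_le_of_value_le {M s : ℝ} {t K k j : ℕ} (hM : 0 < M) (hs : s ≤ M)
    (hj : j ≤ K) (hkj : k + j ≤ t + K)
    (hval : M * (t + 2 * K) + M / 2 ≤ M * k + 2 * M * j + s) : k = t ∧ j = K := by
  have hjR : (j : ℝ) ≤ K := by exact_mod_cast hj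
  have hkj' : k + j = t + K := by
    by_contra h
    have : (k : ℝ) + j + 1 ≤ t + K := by exact_mod_cast (by omega : k + j + 1 ≤ t + K)
    nlinarith
  have hj' : j = K := by
    by_contra h
    have : (k : ℝ) + j = t + K := by exact_mod_cast hkj'
    have : (j : ℝ) + 1 ≤ K := by exact_mod_cast (by omega : j + 1 ≤ K)
    nlinarith
  omega

theorem eq_of_budget_of_value_le {M s : ℝ} {t K k j : ℕ} (hM : 0 < M) (hs₀ : 0 ≤ s)
    (hs : s ≤ M) (hj : j ≤ K) (hbig : 4 * K + 3 * M / 2 < 2 ^ (t + K))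
    (hcost : 2 ^ (k + j) + (M + s + 2 * K + 2 * j) ≤ 2 ^ (t + K) + 4 * K + 3 * M / 2)
    (hval : M * (4 * (2 * t + K) - 3 * t) + M / 2 ≤
      2 * M * (2 * t + K) + M * k + s + 2 * M * j) :
    k = t ∧ s = M / 2 := by
  have hkj := le_of_two_pow_add_le (m := k + j) (x := M + s + 2 * K + 2 * j) (by positivity)
    hbig (by linarith)
  obtain ⟨rfl, rfl⟩ := eq_of_add_le_of_value_le hM hs hj hkj (by linarith)
  exact ⟨rfl, by linarith⟩

/-- **Correctness of the reduction from EQUIPARTITION to Tucker packing**: the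
constructed Tucker packing instance admits a feasible core shape of objective value
at least `M(4N − 3T/2) + M/2` iff the weights `w_1, …, w_T` admit an equipartition. -/
theorem equipartition_reduction (T N : ℕ) (hT : 2 ≤ T) (hTe : Even T) (hTN : T ≤ N)
    (w : Fin T → ℕ) (hw : ∀ n, 2 ≤ w n)
    (M : ℕ) (hM : M = ∑ n, w n)
    (hbig : 4 * ((N : ℝ) - T) + 3 * M / 2 < 2 ^ (N - T / 2))
    (I : Fin N → ℕ)
    (hIdef : ∀ n : Fin N, I n = if h : (n : ℕ) < T then w ⟨n, h⟩ else 2)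
    (a : Fin N → ℕ → ℝ)
    (ha : ∀ (n : Fin N) (i : ℕ), a n i =
      if h : (n : ℕ) < T then
        (if i = 1 then (2 * M : ℝ) else if i = 2 then (M : ℝ) + w ⟨n, h⟩ else 0)
      else (if i = 1 ∨ i = 2 then (2 * M : ℝ) else 0))
    (c : ℝ) (hc : c = 2 ^ (N - T / 2) + 4 * ((N : ℝ) - T) + 3 * M / 2) :
    (∃ R : Fin N → ℕ, (∀ n, 1 ≤ R n ∧ R n ≤ I n) ∧
        ((∏ n, R n : ℕ) : ℝ) + ((∑ n, I n * R n : ℕ) : ℝ) ≤ c ∧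
        (M : ℝ) * (4 * N - 3 * T / 2) + M / 2 ≤ fObj a R) ↔
      (∃ S : Finset (Fin T), S.card = T / 2 ∧
        (∑ n ∈ S, (w n : ℝ)) = M / 2) := by
  obtain ⟨t, rfl⟩ := hTe
  obtain ⟨K, rfl⟩ := Nat.exists_eq_add_of_le hTN
  subst hc
  obtain rfl := eq_tuckerWidths hIdef
  obtain rfl := eq_tuckerColumns ha
  have hMpos : (0 : ℝ) < M := by
    have : 0 < M := hM ▸ sum_pos (fun m _ => by have := hw m; omega) ⟨⟨0, by omega⟩, mem_univ _⟩
    exact_mod_cast this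
  rw [show t + t + K - (t + t) / 2 = t + K by omega] at hbig ⊢
  push_cast at hbig
  constructor
  · rintro ⟨R, hR, hcost, hval⟩
    obtain ⟨S, P, hcost', hval'⟩ := exists_coreShape_cost_le_fObj_eq M w fun n => (hR n).1
    rw [cost_coreShape, ← hM] at hcost'
    rw [← hval', fObj_tuckerColumns_coreShape] at hval
    have hsM := hM ▸ sum_le_sum_of_subset (f := w) (subset_univ S)
    obtain ⟨hk, hs⟩ := eq_of_budget_of_value_le (t := t) (k := #S) (j := #P)
      (s := ∑ m ∈ S, (w m : ℝ)) hMpos (by positivity) (by exact_mod_cast hsM)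
      ((card_le_univ P).trans_eq (Fintype.card_fin K)) (by linarith)
      (by have := (Nat.cast_le (α := ℝ)).mpr hcost'; push_cast at this hcost; linarith)
      (by push_cast at hval; linarith)
    exact ⟨S, by omega, hs⟩
  · rintro ⟨S, hS, hsum⟩
    have hS' : #S = t := by omega
    refine ⟨coreShape S univ, one_le_coreShape_le_tuckerWidths hw S, ?_, ?_⟩
    · rw [← Nat.cast_add, cost_coreShape, ← hM]
      simp only [card_univ, Fintype.card_fin, hS']
      push_cast
      linarith
    · rw [fObj_tuckerColumns_coreShape]
      simp only [card_univ, Fintype.card_fin, hS']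
      push_cast
      linarith
end

section
/- Let 0 < ε ≤ 1, let (I_1,…,I_N) ∈ ℤ_{≥1}^N, let a^(n) ∈ ℝ_{≥0}^{I_n} be nonincreasing sequences for n = 1,…,N, and let F ⊆ [I_1]×⋯×[I_N] be nonempty and downward closed. For each n, let S_n^(ε) = {⌈(1+ε)^k⌉ : k ∈ ℤ_{≥0}, ⌈(1+ε)^k⌉ ≤ I_n}. Let r* maximize f(r) = Σ_{n=1}^N Σ_{i=1}^{R_n} a_i^(n) over F, and let r^(ε) maximize f over the nonempty set (S_1^(ε) × ⋯ × S_N^(ε)) ∩ F. Then f(r^(ε)) ≥ (1+ε)^{−1} · f(r*). -/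
open Finset

lemma Nat.Icc_one_eq_Ioc_zero (n : ℕ) : Icc 1 n = Ioc 0 n :=
  Icc_add_one_left_eq_Ioc 0 n

section Averages

variable {α : Type*} [Field α] [LinearOrder α] [IsStrictOrderedRing α] {a : ℕ → α} {m R : ℕ}

/-- Averages of a nonincreasing sequence are nonincreasing. -/
lemma mul_sum_Icc_le_mul_sum_Icc_of_antitoneOn (hmR : m ≤ R)
    (ha : AntitoneOn a (Set.Icc 1 R)) :
    (m : α) * ∑ i ∈ Icc 1 R, a i ≤ R * ∑ i ∈ Icc 1 m, a i := by
  rcases Nat.eq_zero_or_pos m with rfl | hm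
  · simp
  simp only [Nat.Icc_one_eq_Ioc_zero, ← sum_Ioc_consecutive a (Nat.zero_le m) hmR]
  set head := ∑ i ∈ Ioc 0 m, a i
  have hm_mem : m ∈ Set.Icc 1 R := ⟨hm, hmR⟩
  have hhead : (m : α) * a m ≤ head := by
    have := card_nsmul_le_sum (Ioc 0 m) a (a m) fun i hi =>
      ha ⟨(mem_Ioc.1 hi).1, (mem_Ioc.1 hi).2.trans hmR⟩ hm_mem (mem_Ioc.1 hi).2
    rwa [Nat.card_Ioc, nsmul_eq_mul, Nat.sub_zero] at this
  have htail : ∑ i ∈ Ioc m R, a i ≤ ((R : α) - m) * a m := by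
    have := sum_le_card_nsmul (Ioc m R) a (a m) fun i hi =>
      ha hm_mem ⟨hm.trans_le (mem_Ioc.1 hi).1.le, (mem_Ioc.1 hi).2⟩ (mem_Ioc.1 hi).1.le
    rwa [Nat.card_Ioc, nsmul_eq_mul, Nat.cast_sub hmR] at this
  have hRm : (0 : α) ≤ R - m := sub_nonneg.2 (by exact_mod_cast hmR)
  calc (m : α) * (head + ∑ i ∈ Ioc m R, a i)
      ≤ m * head + (R - m) * (m * a m) := by
        rw [mul_add, mul_left_comm]; gcongr
    _ ≤ m * head + (R - m) * head := by gcongr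
    _ = R * head := by ring

lemma sum_Icc_le_mul_sum_Icc_of_antitoneOn {c : α} (hmR : m ≤ R) (hRc : (R : α) ≤ c * m)
    (ha : AntitoneOn a (Set.Icc 1 R)) (ha0 : ∀ i ∈ Set.Icc 1 m, 0 ≤ a i) :
    ∑ i ∈ Icc 1 R, a i ≤ c * ∑ i ∈ Icc 1 m, a i := by
  rcases Nat.eq_zero_or_pos m with rfl | hm
  · obtain rfl : R = 0 := by simpa using hRc
    simp
  have hm' : (0 : α) < m := by exact_mod_cast hm
  have hsum : 0 ≤ ∑ i ∈ Icc 1 m, a i :=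
    sum_nonneg fun i hi => ha0 i (by simpa using hi)
  refine le_of_mul_le_mul_left ?_ hm'
  calc (m : α) * ∑ i ∈ Icc 1 R, a i ≤ R * ∑ i ∈ Icc 1 m, a i :=
        mul_sum_Icc_le_mul_sum_Icc_of_antitoneOn hmR ha
    _ ≤ c * m * ∑ i ∈ Icc 1 m, a i := by gcongr
    _ = m * (c * ∑ i ∈ Icc 1 m, a i) := by ring

end Averages

lemma exists_ceil_pow_le_lt_mul {c : ℝ} (hc : 1 < c) {r : ℕ} (hr : 1 ≤ r) :
    ∃ k : ℕ, ⌈c ^ k⌉₊ ≤ r ∧ (r : ℝ) < c * ⌈c ^ k⌉₊ := by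
  obtain ⟨k, hle, hlt⟩ := exists_nat_pow_near (x := (r : ℝ)) (by exact_mod_cast hr) hc
  refine ⟨k, Nat.ceil_le.2 hle, ?_⟩
  calc (r : ℝ) < c ^ (k + 1) := hlt
    _ = c * c ^ k := pow_succ' c k
    _ ≤ c * ⌈c ^ k⌉₊ := by gcongr; exact Nat.le_ceil _

lemma fObj_le_mul_fObj {N : ℕ} {a : Fin N → ℕ → ℝ} {R R' : Fin N → ℕ} {c : ℝ}
    (hR' : ∀ n, R' n ≤ R n) (hRc : ∀ n, (R n : ℝ) ≤ c * R' n)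
    (ha : ∀ n, AntitoneOn (a n) (Set.Icc 1 (R n)))
    (ha0 : ∀ n, ∀ i ∈ Set.Icc 1 (R n), 0 ≤ a n i) :
    fObj a R ≤ c * fObj a R' := by
  rw [fObj, fObj, mul_sum]
  exact sum_le_sum fun n _ => sum_Icc_le_mul_sum_Icc_of_antitoneOn (hR' n) (hRc n) (ha n)
    fun i hi => ha0 n i ⟨hi.1, hi.2.trans (hR' n)⟩

theorem grid_search_general {N : ℕ} (ε : ℝ) (hε0 : 0 < ε)
    (I : Fin N → ℕ)
    (a : Fin N → ℕ → ℝ)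
    (ha0 : ∀ n i, 1 ≤ i → i ≤ I n → 0 ≤ a n i)
    (hamono : ∀ n i j, 1 ≤ i → i ≤ j → j ≤ I n → a n j ≤ a n i)
    (F : Set (Fin N → ℕ))
    (hFshape : ∀ R ∈ F, ∀ n, 1 ≤ R n ∧ R n ≤ I n)
    (hFdc : ∀ R ∈ F, ∀ R' : Fin N → ℕ,
      (∀ n, 1 ≤ R' n) → (∀ n, R' n ≤ R n) → R' ∈ F)
    (rstar : Fin N → ℕ) (hrstar : rstar ∈ F)
    (rgrid : Fin N → ℕ)
    (hrgridmax : ∀ R ∈ F, (∀ n, ∃ k : ℕ, R n = ⌈((1 + ε) ^ k : ℝ)⌉₊) →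
      fObj a R ≤ fObj a rgrid) :
    (1 + ε)⁻¹ * fObj a rstar ≤ fObj a rgrid := by
  have hε : (0 : ℝ) < 1 + ε := by linarith
  choose k hk_le hk_lt using fun n =>
    exists_ceil_pow_le_lt_mul (by linarith : 1 < 1 + ε) (hFshape rstar hrstar n).1
  set R' : Fin N → ℕ := fun n => ⌈(1 + ε) ^ k n⌉₊
  have hR'F : R' ∈ F :=
    hFdc rstar hrstar R' (fun n => Nat.one_le_ceil_iff.2 (by positivity)) hk_le
  have hRI n : rstar n ≤ I n := (hFshape rstar hrstar n).2
  have hstar : fObj a rstar ≤ (1 + ε) * fObj a R' :=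
    fObj_le_mul_fObj hk_le (fun n => (hk_lt n).le)
      (fun n i hi j hj hij => hamono n i j hi.1 hij (hj.2.trans (hRI n)))
      (fun n i hi => ha0 n i hi.1 (hi.2.trans (hRI n)))
  rw [inv_mul_le_iff₀ hε]
  exact hstar.trans (by gcongr; exact hrgridmax R' hR'F fun n => ⟨k n, rfl⟩)

/-- **Grid search guarantee**: restricting the search to the geometric grid
`S_n^(ε) = {⌈(1+ε)^k⌉ : k ∈ ℤ_{≥0}, ⌈(1+ε)^k⌉ ≤ I_n}` inside a downward closed
feasible set `F` loses at most a factor `(1+ε)` in the packing objective. -/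
theorem grid_search {N : ℕ} (ε : ℝ) (hε0 : 0 < ε) (hε1 : ε ≤ 1)
    (I : Fin N → ℕ) (hI : ∀ n, 1 ≤ I n)
    (a : Fin N → ℕ → ℝ)
    (ha0 : ∀ n i, 1 ≤ i → i ≤ I n → 0 ≤ a n i)
    (hamono : ∀ n i j, 1 ≤ i → i ≤ j → j ≤ I n → a n j ≤ a n i)
    (F : Set (Fin N → ℕ)) (hFne : F.Nonempty)
    (hFshape : ∀ R ∈ F, ∀ n, 1 ≤ R n ∧ R n ≤ I n)
    (hFdc : ∀ R ∈ F, ∀ R' : Fin N → ℕ,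
      (∀ n, 1 ≤ R' n) → (∀ n, R' n ≤ R n) → R' ∈ F)
    (rstar : Fin N → ℕ) (hrstar : rstar ∈ F)
    (hrstarmax : ∀ R ∈ F, fObj a R ≤ fObj a rstar)
    (rgrid : Fin N → ℕ) (hrgrid : rgrid ∈ F)
    (hgrid : ∀ n, ∃ k : ℕ, rgrid n = ⌈((1 + ε) ^ k : ℝ)⌉₊)
    (hrgridmax : ∀ R ∈ F, (∀ n, ∃ k : ℕ, R n = ⌈((1 + ε) ^ k : ℝ)⌉₊) →
      fObj a R ≤ fObj a rgrid) :
    (1 + ε)⁻¹ * fObj a rstar ≤ fObj a rgrid :=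
  grid_search_general ε hε0 I a ha0 hamono F hFshape hFdc rstar hrstar rgrid hrgridmax
end

section
/- (Approximation guarantee of TuckerPackingSolver.) Consider a Tucker packing instance with shape (I_1,…,I_N) ∈ ℤ_{≥1}^N, nonincreasing sequences a^(n) ∈ ℝ_{≥0}^{I_n}, and budget c ≥ 1 + Σ_{n=1}^N I_n, and let 0 < ε < 1/3. For each integer c_factor with 1 ≤ c_factor ≤ ⌈1/ε⌉·Σ_{n=1}^N I_n, let P(c_factor) = {r ∈ [I_1]×⋯×[I_N] : ∏_{n=1}^N R_n ≤ c − c_factor, Σ_{n=1}^N I_n R_n ≤ c_factor, and R_n ≤ min(⌈1/ε⌉, I_n) for all n}. For each integer k with 0 ≤ k ≤ ⌊log_{1+ε} c⌋, let Q(k) = {r ∈ [I_1]×⋯×[I_N] : ∏_{n=1}^N R_n ≤ (1+ε)^k and Σ_{n=1}^N I_n R_n ≤ c − (1+ε)^k}. Suppose that for every c_factor with P(c_factor) nonempty we are given r'(c_factor) ∈ P(c_factor) with f(r'(c_factor)) ≥ (1−ε)·max_{r∈P(c_factor)} f(r), and for every k with Q(k) nonempty we are given r^(k) ∈ Q(k)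 with f(r^(k)) ≥ (1−ε)·max_{r∈Q(k)} f(r). Let S be the (finite, nonempty) collection of all these selected core shapes. Then every r ∈ S is feasible for the Tucker packing instance, and max_{r∈S} f(r) ≥ (1 − 3ε) · max{f(r) : r ∈ [I_1]×⋯×[I_N], ∏_{n=1}^N R_n + Σ_{n=1}^N I_n R_n ≤ c}. -/
open scoped BigOperators

/-!
If every `R_n ≤ ⌈1/ε⌉`, then `R` itself lies in `P(Σ I_n R_n)`, so the shape selected there is
within a factor `1 - ε` of `f(R)`. Otherwise some `R_m > ⌈1/ε⌉`; lowering it to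
`⌊R_m / (1 + ε)⌋` shrinks the core by a factor `1 + ε`, so the new shape lies in `Q(k)` for
`k = ⌊log_{1+ε} ∏ R_n⌋`, and since `a^(m)` is nonincreasing the new shape keeps at least
`1 - 2ε` of `f(R)`. Finally `(1 - ε)(1 - 2ε) ≥ 1 - 3ε`.
-/

open Finset

section PartialSums

variable {g : ℕ → ℝ} {M v : ℕ}

lemma mul_sum_Icc_le_mul_sum_Icc_of_antitoneOn_s16
    (hg : AntitoneOn g (Set.Icc 1 M)) (hvM : v ≤ M) :
    (v : ℝ) * ∑ i ∈ Icc 1 M, g i ≤ M * ∑ i ∈ Icc 1 v, g i := by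
  rcases Nat.eq_zero_or_pos v with rfl | hv
  · simp
  have hvmem : v ∈ Set.Icc 1 M := ⟨hv, hvM⟩
  have hsplit : ∑ i ∈ Icc 1 M, g i = ∑ i ∈ Icc 1 v, g i + ∑ i ∈ Ioc v M, g i := by
    have hIoc : ∀ t : ℕ, Icc 1 t = Ioc 0 t := fun t => Icc_add_one_left_eq_Ioc 0 t
    rw [hIoc, hIoc]
    exact (sum_Ioc_consecutive g (Nat.zero_le v) hvM).symm
  have hhead : (v : ℝ) * g v ≤ ∑ i ∈ Icc 1 v, g i := by
    simpa using card_nsmul_le_sum (Icc 1 v) g (g v) fun i hi =>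
      hg ⟨(mem_Icc.1 hi).1, (mem_Icc.1 hi).2.trans hvM⟩ hvmem (mem_Icc.1 hi).2
  have htail : ∑ i ∈ Ioc v M, g i ≤ ((M : ℝ) - v) * g v := by
    simpa [Nat.cast_sub hvM] using sum_le_card_nsmul (Ioc v M) g (g v) fun i hi =>
      hg hvmem ⟨hv.trans_le (mem_Ioc.1 hi).1.le, (mem_Ioc.1 hi).2⟩ (mem_Ioc.1 hi).1.le
  have hv0 : (0 : ℝ) ≤ v := v.cast_nonneg
  have hMv : (0 : ℝ) ≤ M - v := sub_nonneg.2 (Nat.cast_le.2 hvM)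
  rw [hsplit]
  nlinarith [mul_le_mul_of_nonneg_left htail hv0, mul_le_mul_of_nonneg_left hhead hMv]

lemma mul_sum_Icc_le_sum_Icc_of_antitoneOn {θ : ℝ}
    (hg : AntitoneOn g (Set.Icc 1 M)) (hg0 : ∀ i ∈ Icc 1 M, 0 ≤ g i)
    (hθv : θ * M ≤ v) (hvM : v ≤ M) :
    θ * ∑ i ∈ Icc 1 M, g i ≤ ∑ i ∈ Icc 1 v, g i := by
  rcases Nat.eq_zero_or_pos M with rfl | hM
  · obtain rfl : v = 0 := Nat.le_zero.1 hvM
    simp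
  have hS0 : 0 ≤ ∑ i ∈ Icc 1 M, g i := sum_nonneg hg0
  have hMpos : (0 : ℝ) < M := Nat.cast_pos.2 hM
  refine le_of_mul_le_mul_left ?_ hMpos
  nlinarith [mul_le_mul_of_nonneg_right hθv hS0, mul_sum_Icc_le_mul_sum_Icc_of_antitoneOn_s16 hg hvM]

end PartialSums

lemma exists_nat_one_add_mul_le_of_ceil_inv_lt {ε : ℝ} {M : ℕ} (hε0 : 0 < ε) (hε1 : ε ≤ 1)
    (hM : ⌈1 / ε⌉₊ < M) : ∃ v : ℕ, 1 ≤ v ∧ (1 + ε) * v ≤ M ∧ (1 - 2 * ε) * M ≤ v := by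
  have hM' : 1 / ε + 1 ≤ M := by
    have : (⌈1 / ε⌉₊ : ℝ) + 1 ≤ M := by exact_mod_cast hM
    linarith [Nat.le_ceil (1 / ε)]
  have hinv : 1 ≤ 1 / ε := one_le_one_div hε0 hε1
  have hεM : 1 + ε ≤ ε * M := by
    have := mul_le_mul_of_nonneg_left hM' hε0.le
    rwa [mul_add, mul_one_div_cancel hε0.ne', mul_one] at this
  have hε1' : 0 < 1 + ε := by linarith
  set x : ℝ := M / (1 + ε) with hx
  have hxM : (1 + ε) * x = M := mul_div_cancel₀ _ hε1'.ne'
  refine ⟨⌊x⌋₊, ?_, ?_, ?_⟩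
  · exact Nat.le_floor <| by rw [Nat.cast_one, hx, le_div_iff₀ hε1']; linarith
  · exact (le_div_iff₀' hε1').1 (Nat.floor_le (by positivity))
  · nlinarith [Nat.sub_one_lt_floor x]

section Logb

variable {b x : ℝ}

lemma pow_floor_logb_le (hb : 1 < b) (hx : 1 ≤ x) : b ^ ⌊Real.logb b x⌋₊ ≤ x := by
  rw [← Real.rpow_natCast, ← Real.le_logb_iff_rpow_le hb (by linarith)]
  exact Nat.floor_le (Real.logb_nonneg hb hx)

lemma lt_pow_floor_logb_add_one (hb : 1 < b) (hx : 0 < x) : x < b ^ (⌊Real.logb b x⌋₊ + 1) := by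
  rw [← Real.rpow_natCast, ← Real.logb_lt_iff_lt_rpow hb hx, Nat.cast_add_one]
  exact Nat.lt_floor_add_one _

end Logb

section Shapes

variable {N : ℕ} (I : Fin N → ℕ) (c ε : ℝ)

def IsCoreShape (R : Fin N → ℕ) : Prop := ∀ n, 1 ≤ R n ∧ R n ≤ I n

def TuckerFeasible (R : Fin N → ℕ) : Prop :=
  IsCoreShape I R ∧ ((∏ n, R n : ℕ) : ℝ) + ((∑ n, I n * R n : ℕ) : ℝ) ≤ c

/-- The set `P(c_factor)`: at most `c_factor` of the budget goes to the factor matrices. -/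
def factorBudgetShapes (cf : ℕ) : Set (Fin N → ℕ) :=
  {R | IsCoreShape I R ∧ ((∏ n, R n : ℕ) : ℝ) ≤ c - (cf : ℝ) ∧ (∑ n, I n * R n) ≤ cf ∧
    ∀ n, R n ≤ min ⌈1 / ε⌉₊ (I n)}

/-- The set `Q(k)`: at most `(1 + ε) ^ k` of the budget goes to the core tensor. -/
def coreBudgetShapes (k : ℕ) : Set (Fin N → ℕ) :=
  {R | IsCoreShape I R ∧ ((∏ n, R n : ℕ) : ℝ) ≤ (1 + ε) ^ k ∧
    ((∑ n, I n * R n : ℕ) : ℝ) ≤ c - (1 + ε) ^ k}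

variable {I c ε} {R R' : Fin N → ℕ}

lemma tuckerFeasible_of_mem_factorBudgetShapes {cf : ℕ} (h : R ∈ factorBudgetShapes I c ε cf) :
    TuckerFeasible I c R := by
  obtain ⟨hR, hprod, hsum, -⟩ := h
  have : ((∑ n, I n * R n : ℕ) : ℝ) ≤ cf := Nat.cast_le.2 hsum
  exact ⟨hR, by linarith⟩

lemma tuckerFeasible_of_mem_coreBudgetShapes {k : ℕ} (h : R ∈ coreBudgetShapes I c ε k) :
    TuckerFeasible I c R := by
  obtain ⟨hR, hprod, hsum⟩ := h
  exact ⟨hR, by linarith⟩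

lemma IsCoreShape.update (hR : IsCoreShape I R) {m : Fin N} {v : ℕ} (hv1 : 1 ≤ v)
    (hvR : v ≤ R m) : IsCoreShape I (Function.update R m v) := by
  intro n
  rcases eq_or_ne n m with rfl | hn
  · simpa using ⟨hv1, hvR.trans (hR n).2⟩
  · simpa [Function.update_of_ne hn] using hR n

lemma IsCoreShape.one_le_prod (hR : IsCoreShape I R) : 1 ≤ ∏ n, R n :=
  one_le_prod' fun n _ => (hR n).1

lemma IsCoreShape.one_le_sum_mul [Nonempty (Fin N)] (hR : IsCoreShape I R) :
    1 ≤ ∑ n, I n * R n := by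
  obtain ⟨n⟩ := ‹Nonempty (Fin N)›
  have hn : 1 * 1 ≤ I n * R n := Nat.mul_le_mul ((hR n).1.trans (hR n).2) (hR n).1
  exact hn.trans (single_le_sum (f := fun n => I n * R n) (fun _ _ => Nat.zero_le _) (mem_univ n))

lemma TuckerFeasible.exists_factorBudgetShapes [Nonempty (Fin N)] (h : TuckerFeasible I c R)
    (hsmall : ∀ n, R n ≤ ⌈1 / ε⌉₊) :
    ∃ cf, 1 ≤ cf ∧ cf ≤ ⌈1 / ε⌉₊ * ∑ n, I n ∧ R ∈ factorBudgetShapes I c ε cf := by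
  refine ⟨∑ n, I n * R n, h.1.one_le_sum_mul, ?_, h.1, ?_, le_rfl,
    fun n => le_min (hsmall n) (h.1 n).2⟩
  · rw [mul_sum]
    exact sum_le_sum fun n _ => (Nat.mul_le_mul_left _ (hsmall n)).trans_eq (Nat.mul_comm _ _)
  · linarith [h.2]

lemma TuckerFeasible.mem_coreBudgetShapes_of_le (h : TuckerFeasible I c R) (hR' : IsCoreShape I R')
    (hle : R' ≤ R) {k : ℕ} (hR'k : ((∏ n, R' n : ℕ) : ℝ) ≤ (1 + ε) ^ k)
    (hkR : (1 + ε) ^ k ≤ ((∏ n, R n : ℕ) : ℝ)) : R' ∈ coreBudgetShapes I c ε k := by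
  have hsum : ((∑ n, I n * R' n : ℕ) : ℝ) ≤ ((∑ n, I n * R n : ℕ) : ℝ) :=
    Nat.cast_le.2 <| sum_le_sum fun n _ => Nat.mul_le_mul_left _ (hle n)
  exact ⟨hR', hR'k, by linarith [h.2]⟩

lemma TuckerFeasible.floor_logb_prod_le (h : TuckerFeasible I c R) {b : ℝ} (hb : 1 < b) :
    ⌊Real.logb b ((∏ n, R n : ℕ) : ℝ)⌋₊ ≤ ⌊Real.logb b c⌋₊ := by
  have hprod : (1 : ℝ) ≤ ((∏ n, R n : ℕ) : ℝ) := by exact_mod_cast h.1.one_le_prod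
  have hsum : (0 : ℝ) ≤ ((∑ n, I n * R n : ℕ) : ℝ) := Nat.cast_nonneg _
  exact Nat.floor_le_floor <| Real.logb_le_logb_of_le hb (by linarith) (by linarith [h.2])

end Shapes

section Objective

variable {N : ℕ} {I : Fin N → ℕ} {a : Fin N → ℕ → ℝ} {c ε : ℝ} {R : Fin N → ℕ}

lemma fObj_nonneg (ha0 : ∀ n, ∀ i ∈ Icc 1 (R n), 0 ≤ a n i) : 0 ≤ fObj a R :=
  sum_nonneg fun n _ => sum_nonneg (ha0 n)

lemma mul_fObj_le_fObj_update {m : Fin N} {v : ℕ} {θ : ℝ}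
    (ha : AntitoneOn (a m) (Set.Icc 1 (R m))) (ha0 : ∀ n, ∀ i ∈ Icc 1 (R n), 0 ≤ a n i)
    (hθ : θ ≤ 1) (hθv : θ * R m ≤ v) (hvR : v ≤ R m) :
    θ * fObj a R ≤ fObj a (Function.update R m v) := by
  rw [fObj, fObj, mul_sum]
  refine sum_le_sum fun n _ => ?_
  rcases eq_or_ne n m with rfl | hn
  · simpa using mul_sum_Icc_le_sum_Icc_of_antitoneOn ha (ha0 n) hθv hvR
  · rw [Function.update_of_ne hn]
    nlinarith [sum_nonneg (ha0 n)]

lemma TuckerFeasible.exists_coreBudgetShapes (h : TuckerFeasible I c R) (hε0 : 0 < ε) (hε1 : ε ≤ 1)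
    (ha : ∀ n, AntitoneOn (a n) (Set.Icc 1 (I n))) (ha0 : ∀ n, ∀ i ∈ Icc 1 (I n), 0 ≤ a n i)
    {m : Fin N} (hm : ⌈1 / ε⌉₊ < R m) :
    ∃ k ≤ ⌊Real.logb (1 + ε) c⌋₊, ∃ R' ∈ coreBudgetShapes I c ε k,
      (1 - 2 * ε) * fObj a R ≤ fObj a R' := by
  obtain ⟨v, hv1, hvR, hRv⟩ := exists_nat_one_add_mul_le_of_ceil_inv_lt hε0 hε1 hm
  have hb : 1 < 1 + ε := by linarith
  have hvle : v ≤ R m := by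
    have : (v : ℝ) ≤ R m := by nlinarith [v.cast_nonneg (α := ℝ)]
    exact_mod_cast this
  have hprod : (1 + ε) * ((∏ n, Function.update R m v n : ℕ) : ℝ) ≤ ((∏ n, R n : ℕ) : ℝ) := by
    rw [prod_update_of_mem (mem_univ m), prod_eq_mul_prod_sdiff_singleton_of_mem (mem_univ m) R]
    push_cast
    rw [← mul_assoc]
    exact mul_le_mul_of_nonneg_right hvR (by positivity)
  have hprod1 : (1 : ℝ) ≤ ((∏ n, R n : ℕ) : ℝ) := by exact_mod_cast h.1.one_le_prod
  set k := ⌊Real.logb (1 + ε) ((∏ n, R n : ℕ) : ℝ)⌋₊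
  have hR'k : ((∏ n, Function.update R m v n : ℕ) : ℝ) ≤ (1 + ε) ^ k := by
    have hlt := lt_pow_floor_logb_add_one (x := ((∏ n, R n : ℕ) : ℝ)) hb (by linarith)
    rw [pow_succ'] at hlt
    exact le_of_mul_le_mul_left (a := 1 + ε) (by linarith) (by linarith)
  refine ⟨k, h.floor_logb_prod_le hb, Function.update R m v,
    h.mem_coreBudgetShapes_of_le (h.1.update hv1 hvle) (update_le_self_iff.2 hvle) hR'k
      (pow_floor_logb_le hb hprod1), ?_⟩
  have hR : ∀ n, R n ≤ I n := fun n => (h.1 n).2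
  exact mul_fObj_le_fObj_update ((ha m).mono (Set.Icc_subset_Icc_right (hR m)))
    (fun n i hi => ha0 n i (Icc_subset_Icc_right (hR n) hi)) (by linarith) hRv hvle

end Objective

theorem tucker_packing_solver_general {N : ℕ} (I : Fin N → ℕ)
    (a : Fin N → ℕ → ℝ)
    (ha0 : ∀ n i, 1 ≤ i → i ≤ I n → 0 ≤ a n i)
    (hamono : ∀ n i j, 1 ≤ i → i ≤ j → j ≤ I n → a n j ≤ a n i)
    (c : ℝ)
    (ε : ℝ) (hε0 : 0 < ε) (hε3 : ε < 1 / 3)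
    (P : ℕ → Set (Fin N → ℕ))
    (hP : ∀ cf : ℕ, P cf = {R | (∀ n, 1 ≤ R n ∧ R n ≤ I n) ∧
      ((∏ n, R n : ℕ) : ℝ) ≤ c - (cf : ℝ) ∧
      (∑ n, I n * R n) ≤ cf ∧
      ∀ n, R n ≤ min ⌈1 / ε⌉₊ (I n)})
    (Q : ℕ → Set (Fin N → ℕ))
    (hQ : ∀ k : ℕ, Q k = {R | (∀ n, 1 ≤ R n ∧ R n ≤ I n) ∧
      ((∏ n, R n : ℕ) : ℝ) ≤ (1 + ε) ^ k ∧
      ((∑ n, I n * R n : ℕ) : ℝ) ≤ c - (1 + ε) ^ k})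
    (r' : ℕ → Fin N → ℕ)
    (hr' : ∀ cf : ℕ, 1 ≤ cf → cf ≤ ⌈1 / ε⌉₊ * ∑ n, I n → (P cf).Nonempty →
      r' cf ∈ P cf ∧ ∀ R ∈ P cf, (1 - ε) * fObj a R ≤ fObj a (r' cf))
    (rk : ℕ → Fin N → ℕ)
    (hrk : ∀ k : ℕ, k ≤ ⌊Real.logb (1 + ε) c⌋₊ → (Q k).Nonempty →
      rk k ∈ Q k ∧ ∀ R ∈ Q k, (1 - ε) * fObj a R ≤ fObj a (rk k))
    (S : Set (Fin N → ℕ))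
    (hS : S = {r | (∃ cf : ℕ, 1 ≤ cf ∧ cf ≤ ⌈1 / ε⌉₊ * ∑ n, I n ∧
        (P cf).Nonempty ∧ r = r' cf) ∨
      (∃ k : ℕ, k ≤ ⌊Real.logb (1 + ε) c⌋₊ ∧ (Q k).Nonempty ∧ r = rk k)}) :
    (∀ r ∈ S, (∀ n, 1 ≤ r n ∧ r n ≤ I n) ∧
      ((∏ n, r n : ℕ) : ℝ) + ((∑ n, I n * r n : ℕ) : ℝ) ≤ c) ∧
    ∀ R : Fin N → ℕ, (∀ n, 1 ≤ R n ∧ R n ≤ I n) →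
      ((∏ n, R n : ℕ) : ℝ) + ((∑ n, I n * R n : ℕ) : ℝ) ≤ c →
      ∃ r ∈ S, (1 - 3 * ε) * fObj a R ≤ fObj a r := by
  have ha : ∀ n, AntitoneOn (a n) (Set.Icc 1 (I n)) := fun n i hi j hj hij =>
    hamono n i j hi.1 hij hj.2
  have ha0' : ∀ n, ∀ i ∈ Icc 1 (I n), 0 ≤ a n i := fun n i hi =>
    ha0 n i (mem_Icc.1 hi).1 (mem_Icc.1 hi).2
  obtain rfl : P = factorBudgetShapes I c ε := funext hP
  obtain rfl : Q = coreBudgetShapes I c ε := funext hQ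
  subst hS
  refine ⟨?_, fun R hR hRc => ?_⟩
  · rintro r (⟨cf, h1, h2, hne, rfl⟩ | ⟨k, hk, hne, rfl⟩)
    · exact tuckerFeasible_of_mem_factorBudgetShapes (hr' cf h1 h2 hne).1
    · exact tuckerFeasible_of_mem_coreBudgetShapes (hrk k hk hne).1
  have hfeas : TuckerFeasible I c R := ⟨hR, hRc⟩
  have hf0 : 0 ≤ fObj a R := fObj_nonneg fun n i hi => ha0' n i (Icc_subset_Icc_right (hR n).2 hi)
  rcases isEmpty_or_nonempty (Fin N) with hN | hN
  · have hR0 : R ∈ coreBudgetShapes I c ε 0 :=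
      hfeas.mem_coreBudgetShapes_of_le hR le_rfl (by simp) (by simp)
    exact ⟨rk 0, Or.inr ⟨0, Nat.zero_le _, ⟨R, hR0⟩, rfl⟩, by simp [fObj]⟩
  by_cases hsmall : ∀ n, R n ≤ ⌈1 / ε⌉₊
  · obtain ⟨cf, h1, h2, hRP⟩ := hfeas.exists_factorBudgetShapes hsmall
    refine ⟨r' cf, Or.inl ⟨cf, h1, h2, ⟨R, hRP⟩, rfl⟩, ?_⟩
    nlinarith [(hr' cf h1 h2 ⟨R, hRP⟩).2 R hRP]
  · obtain ⟨m, hm⟩ := not_forall.1 hsmall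
    obtain ⟨k, hk, R', hR'Q, hR'⟩ :=
      hfeas.exists_coreBudgetShapes hε0 (by linarith) ha ha0' (not_le.1 hm)
    refine ⟨rk k, Or.inr ⟨k, hk, ⟨R', hR'Q⟩, rfl⟩, ?_⟩
    nlinarith [(hrk k hk ⟨R', hR'Q⟩).2 R' hR'Q,
      mul_le_mul_of_nonneg_left hR' (by linarith : 0 ≤ 1 - ε),
      mul_nonneg (mul_nonneg hε0.le hε0.le) hf0]

/-- **Approximation guarantee of `TuckerPackingSolver`**: every core shape selected
from the small budget splits `P(c_factor)` or the large budget splits `Q(k)` is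
feasible, and the best selected shape is a `(1 − 3ε)`-approximation to the Tucker
packing problem. -/
theorem tucker_packing_solver {N : ℕ} (I : Fin N → ℕ) (hI : ∀ n, 1 ≤ I n)
    (a : Fin N → ℕ → ℝ)
    (ha0 : ∀ n i, 1 ≤ i → i ≤ I n → 0 ≤ a n i)
    (hamono : ∀ n i j, 1 ≤ i → i ≤ j → j ≤ I n → a n j ≤ a n i)
    (c : ℝ) (hc : 1 + ((∑ n, I n : ℕ) : ℝ) ≤ c)
    (ε : ℝ) (hε0 : 0 < ε) (hε3 : ε < 1 / 3)
    (P : ℕ → Set (Fin N → ℕ))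
    (hP : ∀ cf : ℕ, P cf = {R | (∀ n, 1 ≤ R n ∧ R n ≤ I n) ∧
      ((∏ n, R n : ℕ) : ℝ) ≤ c - (cf : ℝ) ∧
      (∑ n, I n * R n) ≤ cf ∧
      ∀ n, R n ≤ min ⌈1 / ε⌉₊ (I n)})
    (Q : ℕ → Set (Fin N → ℕ))
    (hQ : ∀ k : ℕ, Q k = {R | (∀ n, 1 ≤ R n ∧ R n ≤ I n) ∧
      ((∏ n, R n : ℕ) : ℝ) ≤ (1 + ε) ^ k ∧
      ((∑ n, I n * R n : ℕ) : ℝ) ≤ c - (1 + ε) ^ k})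
    (r' : ℕ → Fin N → ℕ)
    (hr' : ∀ cf : ℕ, 1 ≤ cf → cf ≤ ⌈1 / ε⌉₊ * ∑ n, I n → (P cf).Nonempty →
      r' cf ∈ P cf ∧ ∀ R ∈ P cf, (1 - ε) * fObj a R ≤ fObj a (r' cf))
    (rk : ℕ → Fin N → ℕ)
    (hrk : ∀ k : ℕ, k ≤ ⌊Real.logb (1 + ε) c⌋₊ → (Q k).Nonempty →
      rk k ∈ Q k ∧ ∀ R ∈ Q k, (1 - ε) * fObj a R ≤ fObj a (rk k))
    (S : Set (Fin N → ℕ))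
    (hS : S = {r | (∃ cf : ℕ, 1 ≤ cf ∧ cf ≤ ⌈1 / ε⌉₊ * ∑ n, I n ∧
        (P cf).Nonempty ∧ r = r' cf) ∨
      (∃ k : ℕ, k ≤ ⌊Real.logb (1 + ε) c⌋₊ ∧ (Q k).Nonempty ∧ r = rk k)}) :
    (∀ r ∈ S, (∀ n, 1 ≤ r n ∧ r n ≤ I n) ∧
      ((∏ n, r n : ℕ) : ℝ) + ((∑ n, I n * r n : ℕ) : ℝ) ≤ c) ∧
    ∀ R : Fin N → ℕ, (∀ n, 1 ≤ R n ∧ R n ≤ I n) →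
      ((∏ n, R n : ℕ) : ℝ) + ((∑ n, I n * R n : ℕ) : ℝ) ≤ c →
      ∃ r ∈ S, (1 - 3 * ε) * fObj a R ≤ fObj a r :=
  tucker_packing_solver_general I a ha0 hamono c ε hε0 hε3 P hP Q hQ r' hr' rk hrk S hS
end
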